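/- arXiv:1309.0269 — 3 statements merged into one kernel-verified Lean document; each statement's English description precedes it below -/
import Mathlib

section
/- Let G be a finite connected graph with injective edge weights w and minimal spanning tree T. For p ∈ ℝ, let the p-clusters be the connected components of the subgraph of G consisting of edges e with w(e) ≤ p. Then for any p-cluster C and any two vertices x, y ∈ C, the unique path in T from x to y uses only edges with weight at most p; in particular it stays inside C. -/
/-!
Cut property: deleting an edge `ab` of a minimal spanning tree `T` leaves two components, and
every edge `uv` of `G` joining them has `w ab ≤ w uv`, since otherwise exchanging `ab` for `uv`
yields a lighter spanning tree. An edge `ab` on the `T`-path from `x` to `y` separates `x` from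
`y`, so a walk from `x` to `y` through edges of weight `≤ p` has to cross between the two
components along such an edge; hence `w ab ≤ p`.
-/

open SimpleGraph

variable {V : Type*}

/-- The total weight of (the edge set of) a graph. -/
noncomputable def graphWeight [Fintype V] (T : SimpleGraph V) (w : Sym2 V → ℝ) : ℝ :=
  ∑ e ∈ T.edgeSet.toFinite.toFinset, w e

/-- `T` is a spanning tree of `G`: a subgraph (on all the vertices) which is a tree. -/
def IsSpanningTree (G T : SimpleGraph V) : Prop := T ≤ G ∧ T.IsTree

/-- `T` is a minimal spanning tree of `G` with respect to the weights `w`. -/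
def IsMST [Fintype V] (G : SimpleGraph V) (w : Sym2 V → ℝ) (T : SimpleGraph V) : Prop :=
  IsSpanningTree G T ∧
    ∀ T' : SimpleGraph V, IsSpanningTree G T' → graphWeight T w ≤ graphWeight T' w

namespace SimpleGraph

variable {G H T : SimpleGraph V} {a b u v x y : V}

lemma Reachable.deleteEdges_left_or_right (hab : a ≠ b) (h : G.Reachable x a) :
    (G.deleteEdges {s(a, b)}).Reachable x a ∨ (G.deleteEdges {s(a, b)}).Reachable x b := by
  classical
  obtain ⟨P, hP⟩ := h.exists_isPath
  by_cases heP : s(a, b) ∈ P.edges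
  · have hbP := P.snd_mem_support_of_mem_edges heP
    have haP := Walk.endpoint_notMem_support_takeUntil hP hbP hab
    refine .inr ⟨(P.takeUntil b hbP).toDeleteEdges {s(a, b)} ?_⟩
    rintro e he rfl
    exact haP ((P.takeUntil b hbP).fst_mem_support_of_mem_edges he)
  · exact .inl ⟨P.toDeleteEdges {s(a, b)} (by rintro e he rfl; exact heP he)⟩

lemma IsAcyclic.not_reachable_deleteEdges_of_mem_edges (hT : T.IsAcyclic) {e : Sym2 V}
    {P : T.Walk x y} (hP : P.IsPath) (he : e ∈ P.edges) :
    ¬(T.deleteEdges {e}).Reachable x y := by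
  classical
  induction e using Sym2.ind with | _ a b => ?_
  rw [reachable_deleteEdges_iff_exists_walk]
  rintro ⟨Q, hQ⟩
  have : (⟨P, hP⟩ : T.Path x y) = Q.toPath := (hT.subsingleton_path x y).elim _ _
  exact hQ (Q.edges_toPath_subset_edges (congrArg Subtype.val this ▸ he))

lemma Connected.deleteEdges_sup_edge (hT : T.Connected) (hab : T.Adj a b)
    (huv : ¬(T.deleteEdges {s(a, b)}).Reachable u v) :
    (T.deleteEdges {s(a, b)} ⊔ edge u v).Connected := by
  set D := T.deleteEdges {s(a, b)}
  have side (z : V) : D.connectedComponentMk z = D.connectedComponentMk a ∨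
      D.connectedComponentMk z = D.connectedComponentMk b := by
    simpa only [ConnectedComponent.eq] using (hT.preconnected z a).deleteEdges_left_or_right hab.ne
  have hsep : D.connectedComponentMk u ≠ D.connectedComponentMk v := by
    rwa [Ne, ConnectedComponent.eq]
  have hne : u ≠ v := by rintro rfl; exact huv .rfl
  have huv' : (D ⊔ edge u v).Reachable u v := Adj.reachable (by simp [edge_adj, hne])
  rw [connected_iff_exists_forall_reachable]
  refine ⟨u, fun z => ?_⟩
  -- `D` has at most the two components of `a` and `b`, and `u`, `v` lie in different ones.
  have : D.Reachable u z ∨ D.Reachable v z := by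
    simp only [← ConnectedComponent.eq]
    grind
  exact this.elim (·.mono le_sup_left) fun h => huv'.trans (h.mono le_sup_left)

lemma IsTree.deleteEdges_sup_edge (hT : T.IsTree) (hab : T.Adj a b)
    (huv : ¬(T.deleteEdges {s(a, b)}).Reachable u v) :
    (T.deleteEdges {s(a, b)} ⊔ edge u v).IsTree :=
  ⟨hT.connected.deleteEdges_sup_edge hab huv,
    (hT.isAcyclic.anti (deleteEdges_le _)).sup_edge_of_not_reachable huv⟩

lemma Walk.reachable_of_mem_support_of_edges_subset (P : G.Walk x y)
    (hP : ∀ e ∈ P.edges, e ∈ H.edgeSet) (hv : v ∈ P.support) : H.Reachable x v := by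
  classical
  exact ⟨(P.transfer H hP).takeUntil v (by rwa [support_transfer])⟩

end SimpleGraph

section Weight

variable [Fintype V] {T : SimpleGraph V} {w : Sym2 V → ℝ} {u v : V} {e : Sym2 V}

lemma graphWeight_deleteEdges_singleton (he : e ∈ T.edgeSet) :
    graphWeight (T.deleteEdges {e}) w = graphWeight T w - w e := by
  classical
  have hfin :
      (T.deleteEdges {e}).edgeSet.toFinite.toFinset = T.edgeSet.toFinite.toFinset.erase e := by
    ext; simp [edgeSet_deleteEdges, and_comm]
  rw [graphWeight, graphWeight, hfin, Finset.sum_erase_eq_sub (by simpa using he)]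

lemma graphWeight_sup_edge (hne : u ≠ v) (huv : ¬T.Adj u v) :
    graphWeight (T ⊔ edge u v) w = graphWeight T w + w s(u, v) := by
  classical
  have hfin :
      (T ⊔ edge u v).edgeSet.toFinite.toFinset = insert s(u, v) T.edgeSet.toFinite.toFinset := by
    ext; simp [edgeSet_sup, edgeSet_edge_of_ne hne]
  rw [graphWeight, graphWeight, hfin, Finset.sum_insert (by simpa using huv), add_comm]

end Weight

section MST

variable [Fintype V] {G T : SimpleGraph V} {w : Sym2 V → ℝ}

lemma IsMST.weight_le_of_not_reachable_deleteEdges (hT : IsMST G w T) {a b u v : V}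
    (hab : T.Adj a b) (huv : G.Adj u v) (hsep : ¬(T.deleteEdges {s(a, b)}).Reachable u v) :
    w s(a, b) ≤ w s(u, v) := by
  obtain ⟨⟨hTG, hTree⟩, hmin⟩ := hT
  have hT'G : T.deleteEdges {s(a, b)} ⊔ edge u v ≤ G :=
    sup_le ((deleteEdges_le _).trans hTG) ((edge_le_iff G).mpr (.inr huv))
  have hweight := hmin _ ⟨hT'G, hTree.deleteEdges_sup_edge hab hsep⟩
  rw [graphWeight_sup_edge huv.ne (fun h => hsep h.reachable),
    graphWeight_deleteEdges_singleton hab] at hweight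
  linarith

lemma IsMST.weight_le_of_mem_edges_of_reachable (hT : IsMST G w T) {p : ℝ} {x y : V}
    (hxy : (G.deleteEdges {e | p < w e}).Reachable x y) {P : T.Walk x y} (hP : P.IsPath)
    {f : Sym2 V} (hf : f ∈ P.edges) : w f ≤ p := by
  induction f using Sym2.ind with | _ a b => ?_
  obtain ⟨W⟩ := hxy
  obtain ⟨⟨⟨u, v⟩, huv⟩, -, hxu, hxv⟩ := W.exists_boundary_dart
    {z | (T.deleteEdges {s(a, b)}).Reachable x z} .rfl
    (hT.1.2.isAcyclic.not_reachable_deleteEdges_of_mem_edges hP hf)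
  obtain ⟨hGuv, hwuv⟩ := deleteEdges_adj.mp huv
  calc w s(a, b) ≤ w s(u, v) :=
        hT.weight_le_of_not_reachable_deleteEdges (P.adj_of_mem_edges hf) hGuv
          fun h => hxv (hxu.trans h)
    _ ≤ p := by simpa using hwuv

end MST

theorem mst_path_stays_in_cluster_general [Fintype V] (G : SimpleGraph V)
    (w : Sym2 V → ℝ)
    (T : SimpleGraph V) (hT : IsMST G w T) (p : ℝ) (x y : V)
    (hxy : (G.deleteEdges {e | p < w e}).Reachable x y)
    (pth : T.Walk x y) (hpth : pth.IsPath) :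
    (∀ f ∈ pth.edges, w f ≤ p) ∧
      ∀ v ∈ pth.support, (G.deleteEdges {e | p < w e}).Reachable x v := by
  have hlight : ∀ f ∈ pth.edges, w f ≤ p := fun _ =>
    hT.weight_le_of_mem_edges_of_reachable hxy hpth
  have hcluster : ∀ f ∈ pth.edges, f ∈ (G.deleteEdges {e | p < w e}).edgeSet := fun f hf => by
    rw [edgeSet_deleteEdges]
    exact ⟨edgeSet_mono hT.1.1 (pth.edges_subset_edgeSet hf), not_lt.mpr (hlight f hf)⟩
  exact ⟨hlight, fun v hv => pth.reachable_of_mem_support_of_edges_subset hcluster hv⟩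

/-- If `x` and `y` lie in the same `p`-cluster (connected component of edges of weight `≤ p`),
then the path of the minimal spanning tree from `x` to `y` uses only edges of weight `≤ p`;
in particular it stays inside the `p`-cluster of `x`. -/
theorem mst_path_stays_in_cluster [Fintype V] (G : SimpleGraph V) (hG : G.Connected)
    (w : Sym2 V → ℝ) (hw : Set.InjOn w G.edgeSet)
    (T : SimpleGraph V) (hT : IsMST G w T) (p : ℝ) (x y : V)
    (hxy : (G.deleteEdges {e | p < w e}).Reachable x y)
    (pth : T.Walk x y) (hpth : pth.IsPath) :
    (∀ f ∈ pth.edges, w f ≤ p) ∧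
      ∀ v ∈ pth.support, (G.deleteEdges {e | p < w e}).Reachable x v :=
  mst_path_stays_in_cluster_general G w T hT p x y hxy pth hpth
end

section
/- Let G be a finite connected graph with injective edge weights w, let T be its minimal spanning tree, and fix p ∈ ℝ. Let G^p be the graph obtained by contracting each p-cluster of G to a single vertex (keeping edges of weight > p between distinct clusters, with their weights). Then the image of T under these contractions is precisely the minimal spanning tree of G^p. -/
/-!
By the cycle property of minimal spanning trees, the endpoints of an edge of `G` of weight `≤ p`
are joined in `T` by a path of edges of weight `≤ p`, so the `p`-clusters of `G` are exactly those
of `T`. Hence the edges of `T` of weight `> p` connect the clusters, and each of them is a bridge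
because `T` is a tree. Conversely, if `S` is any spanning tree of `G^p`, then `S` together with
the edges of `T` of weight `≤ p` is a spanning tree of `G`; comparing its weight with that of `T`,
the common edges of weight `≤ p` cancel.
-/

open SimpleGraph

variable {V : Type*}

def lowEdges [Fintype V] (G : SimpleGraph V) (w : Sym2 V → ℝ) (p : ℝ) : Set (Sym2 V) :=
  {e ∈ G.edgeSet | w e ≤ p}

/-- A set `S` of edges of weight `> p` is a spanning tree of the contracted graph `G^p`
(whose vertices are the `p`-clusters): together with all the edges of weight `≤ p` it connects
the graph, and it is minimal (no edge of `S` can be removed keeping connectivity). -/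
def IsClusterSpanningTree [Fintype V] (G : SimpleGraph V) (w : Sym2 V → ℝ) (p : ℝ)
    (S : Set (Sym2 V)) : Prop :=
  S ⊆ {e ∈ G.edgeSet | p < w e} ∧
  (SimpleGraph.fromEdgeSet (lowEdges G w p ∪ S)).Connected ∧
  ∀ e ∈ S, ¬ (SimpleGraph.fromEdgeSet (lowEdges G w p ∪ (S \ {e}))).Connected

namespace SimpleGraph

variable {G H : SimpleGraph V}

lemma edgeSet_fromEdgeSet_of_subset {s : Set (Sym2 V)} (h : s ⊆ G.edgeSet) :
    (fromEdgeSet s).edgeSet = s := by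
  rw [edgeSet_fromEdgeSet, sdiff_eq_left]
  exact Set.subset_compl_iff_disjoint_right.1 (h.trans G.edgeSet_subset_compl_diagSet)

lemma Reachable.of_forall_adj (h : ∀ ⦃u v⦄, G.Adj u v → H.Reachable u v) {u v : V}
    (huv : G.Reachable u v) : H.Reachable u v := by
  rw [reachable_iff_reflTransGen] at huv ⊢
  exact Relation.reflTransGen_closed
    (fun a b hab ↦ (reachable_iff_reflTransGen a b).1 (h hab)) _ _ huv

lemma Connected.of_forall_adj (hG : G.Connected) (h : ∀ ⦃u v⦄, G.Adj u v → H.Reachable u v) :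
    H.Connected :=
  (connected_iff H).2 ⟨fun u v ↦ (hG.preconnected u v).of_forall_adj h, hG.nonempty⟩

lemma Preconnected.reachable_deleteEdges_or (hG : G.Preconnected) (x y z : V) :
    (G.deleteEdges {s(x, y)}).Reachable z x ∨ (G.deleteEdges {s(x, y)}).Reachable z y := by
  classical
  by_contra! h
  obtain ⟨P, hP⟩ := hG.exists_isPath z x
  have he := P.mem_edges_of_not_reachable_deleteEdges h.1
  have hy := P.snd_mem_support_of_mem_edges he
  have hx := Walk.endpoint_notMem_support_takeUntil hP hy (P.adj_of_mem_edges he).ne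
  exact h.2 ⟨(P.takeUntil y hy).toDeleteEdges _ fun e he' hex ↦
    hx ((P.takeUntil y hy).fst_mem_support_of_mem_edges (hex ▸ he'))⟩

lemma Preconnected.connected_deleteEdges_sup_edge (hG : G.Preconnected) {a b x y : V}
    (hxy : ¬ (G.deleteEdges {s(a, b)}).Reachable x y) :
    (G.deleteEdges {s(a, b)} ⊔ edge x y).Connected := by
  set D := G.deleteEdges {s(a, b)}
  have hside : ∀ z, D.Reachable z x ∨ D.Reachable z y := by
    intro z
    rcases hG.reachable_deleteEdges_or a b z with hz | hz <;>
    rcases hG.reachable_deleteEdges_or a b x with hx | hx <;>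
    rcases hG.reachable_deleteEdges_or a b y with hy | hy <;>
    first
      | exact absurd (hx.trans hy.symm) hxy
      | exact .inl (hz.trans hx.symm)
      | exact .inr (hz.trans hy.symm)
  have hxy' : (D ⊔ edge x y).Adj x y :=
    .inr ((edge_adj ..).2 ⟨.inl ⟨rfl, rfl⟩, fun h ↦ hxy (h ▸ .rfl)⟩)
  refine (connected_iff_exists_forall_reachable _).2 ⟨x, fun z ↦ ?_⟩
  rcases hside z with hz | hz
  · exact (hz.mono le_sup_left).symm
  · exact hxy'.reachable.trans (hz.mono le_sup_left).symm

lemma IsAcyclic.not_reachable_deleteEdges_of_mem_edges_s5 (hG : G.IsAcyclic) {u v : V}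
    {P : G.Walk u v} (hP : P.IsPath) {e : Sym2 V} (he : e ∈ P.edges) :
    ¬ (G.deleteEdges {e}).Reachable u v := by
  intro h
  obtain ⟨Q, hQ⟩ := h.exists_isPath
  have hPQ : P = Q.mapLe (deleteEdges_le _) :=
    congrArg Subtype.val ((hG.subsingleton_path u v).elim ⟨P, hP⟩ ⟨_, hQ.mapLe _⟩)
  rw [hPQ, Walk.edges_mapLe_eq_edges] at he
  simpa [edgeSet_deleteEdges] using Q.edges_subset_edgeSet he

lemma IsTree.not_connected_deleteEdges (hG : G.IsTree) {e : Sym2 V} (he : e ∈ G.edgeSet) :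
    ¬ (G.deleteEdges {e}).Connected := by
  induction e with
  | h a b => exact fun h ↦ isAcyclic_iff_forall_isBridge.1 hG.isAcyclic he (h.preconnected a b)

lemma isAcyclic_of_forall_notMem_isBridge {K : SimpleGraph V} (hK : K.IsAcyclic)
    (h : ∀ e ∈ H.edgeSet, e ∉ K.edgeSet → H.IsBridge e) : H.IsAcyclic := by
  intro u c hc
  by_cases hcK : ∀ e ∈ c.edges, e ∈ K.edgeSet
  · exact hK (c.transfer K hcK) (hc.transfer hcK)
  · push Not at hcK
    obtain ⟨e, hec, heK⟩ := hcK
    exact (h e (c.edges_subset_edgeSet hec) heK).notMem_edges_of_isCycle hc hec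

end SimpleGraph

lemma finsum_mem_eq_sep_le_add_sep_lt {α : Type*} {s : Set α} (hs : s.Finite) (w : α → ℝ)
    (p : ℝ) : ∑ᶠ e ∈ s, w e = ∑ᶠ e ∈ {e ∈ s | w e ≤ p}, w e + ∑ᶠ e ∈ {e ∈ s | p < w e}, w e := by
  have hdisj : Disjoint {e ∈ s | w e ≤ p} {e ∈ s | p < w e} :=
    Set.disjoint_left.2 fun e h1 h2 ↦ (not_lt.2 h1.2) h2.2
  rw [← finsum_mem_union hdisj (hs.sep _) (hs.sep _)]
  congr! 2 with e
  simp only [Set.mem_union, Set.mem_ofPred_eq, ← and_or_left, le_or_gt, and_true]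

section MinimalSpanningTree

variable [Fintype V] {G T : SimpleGraph V} {w : Sym2 V → ℝ}

lemma graphWeight_eq_finsum (T : SimpleGraph V) (w : Sym2 V → ℝ) :
    graphWeight T w = ∑ᶠ e ∈ T.edgeSet, w e :=
  (finsum_mem_eq_finite_toFinset_sum w _).symm

lemma graphWeight_deleteEdges_sup_edge {e : Sym2 V} (he : e ∈ T.edgeSet) {x y : V} (hxy : x ≠ y)
    (hf : s(x, y) ∉ (T.deleteEdges {e}).edgeSet) :
    graphWeight (T.deleteEdges {e} ⊔ edge x y) w + w e = graphWeight T w + w s(x, y) := by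
  have hdel : ∑ᶠ g ∈ T.edgeSet, w g = w e + ∑ᶠ g ∈ (T.deleteEdges {e}).edgeSet, w g := by
    rw [edgeSet_deleteEdges, ← finsum_mem_insert w (fun h ↦ h.2 rfl) (Set.toFinite _),
      Set.insert_sdiff_singleton, Set.insert_eq_of_mem he]
  rw [graphWeight_eq_finsum, graphWeight_eq_finsum, edgeSet_sup, edgeSet_edge_of_ne hxy,
    Set.union_singleton, finsum_mem_insert w hf (Set.toFinite _), hdel]
  ring

theorem IsMST.weight_le_of_not_reachable (hT : IsMST G w T) {a b x y : V}
    (hab : s(a, b) ∈ T.edgeSet) (hxy : s(x, y) ∈ G.edgeSet)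
    (hsep : ¬ (T.deleteEdges {s(a, b)}).Reachable x y) : w s(a, b) ≤ w s(x, y) := by
  obtain ⟨⟨hTG, hTtree⟩, hmin⟩ := hT
  have hne : x ≠ y := fun h ↦ hsep (h ▸ .rfl)
  have hf : s(x, y) ∉ (T.deleteEdges {s(a, b)}).edgeSet := fun h ↦ hsep (Adj.reachable h)
  have hspan : IsSpanningTree G (T.deleteEdges {s(a, b)} ⊔ edge x y) :=
    ⟨sup_le ((deleteEdges_le _).trans hTG)
        ((edge_le ..).2 (Set.sdiff_subset.trans (Set.singleton_subset_iff.2 hxy))),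
      hTtree.connected.preconnected.connected_deleteEdges_sup_edge hsep,
      (hTtree.isAcyclic.anti (deleteEdges_le _)).sup_edge_of_not_reachable hsep⟩
  have := hmin _ hspan
  have := graphWeight_deleteEdges_sup_edge (w := w) hab hne hf
  linarith

theorem IsMST.weight_le_of_mem_path (hT : IsMST G w T) {u v : V} {P : T.Walk u v}
    (hP : P.IsPath) (huv : s(u, v) ∈ G.edgeSet) {e : Sym2 V} (he : e ∈ P.edges) :
    w e ≤ w s(u, v) := by
  induction e with
  | h a b =>
    exact hT.weight_le_of_not_reachable (P.edges_subset_edgeSet he) huv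
      (hT.1.2.isAcyclic.not_reachable_deleteEdges_of_mem_edges_s5 hP he)

theorem IsMST.reachable_of_weight_le (hT : IsMST G w T) {p : ℝ} {u v : V}
    (huv : s(u, v) ∈ G.edgeSet) (hp : w s(u, v) ≤ p) :
    (fromEdgeSet {e ∈ T.edgeSet | w e ≤ p}).Reachable u v := by
  obtain ⟨P, hP⟩ := hT.1.2.connected.preconnected.exists_isPath u v
  refine ⟨P.transfer _ fun e he ↦ ?_⟩
  have heT := P.edges_subset_edgeSet he
  rw [edgeSet_fromEdgeSet]
  exact ⟨⟨heT, (hT.weight_le_of_mem_path hP huv he).trans hp⟩, T.not_isDiag_of_mem_edgeSet heT⟩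

lemma IsClusterSpanningTree.isBridge {p : ℝ} {S : Set (Sym2 V)}
    (hS : IsClusterSpanningTree G w p S) {e : Sym2 V} (he : e ∈ S) :
    (fromEdgeSet (lowEdges G w p ∪ S)).IsBridge e := by
  induction e with
  | h x y =>
    intro hxy
    have hlow : s(x, y) ∉ lowEdges G w p := fun h ↦ (not_lt.2 h.2) (hS.1 he).2
    apply hS.2.2 _ he
    rw [← Set.sdiff_singleton_eq_self hlow, ← Set.union_sdiff_distrib, fromEdgeSet_sdiff]
    exact hS.2.1.connected_delete_edge_of_not_isBridge (not_not.2 hxy)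

theorem IsMST.isClusterSpanningTree (hT : IsMST G w T) (p : ℝ) :
    IsClusterSpanningTree G w p {e ∈ T.edgeSet | p < w e} := by
  obtain ⟨hTG, hTtree⟩ := hT.1
  refine ⟨fun e he ↦ ⟨edgeSet_mono hTG he.1, he.2⟩, ?_, fun e he hconn ↦ ?_⟩
  · refine hTtree.connected.mono ((le_fromEdgeSet_iff ..).2 fun e he ↦ ?_)
    rcases le_or_gt (w e) p with h | h
    · exact .inl ⟨edgeSet_mono hTG he, h⟩
    · exact .inr ⟨he, h⟩
  · refine hTtree.not_connected_deleteEdges he.1 (hconn.of_forall_adj fun u v huv ↦ ?_)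
    rcases ((fromEdgeSet_adj _).1 huv).1 with hlow | hhigh
    · refine (hT.reachable_of_weight_le hlow.1 hlow.2).mono ((fromEdgeSet_le _).2 ?_)
      rintro g ⟨hg, -⟩
      rw [edgeSet_deleteEdges]
      exact ⟨hg.1, by rintro rfl; exact (not_lt.2 hg.2) he.2⟩
    · exact Adj.reachable (deleteEdges_adj.2 ⟨hhigh.1.1, hhigh.2⟩)

lemma IsMST.sep_le_union_subset_edgeSet (hT : IsMST G w T) {p : ℝ} {S : Set (Sym2 V)}
    (hS : IsClusterSpanningTree G w p S) : {e ∈ T.edgeSet | w e ≤ p} ∪ S ⊆ G.edgeSet :=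
  Set.union_subset (fun _ he ↦ edgeSet_mono hT.1.1 he.1) fun _ he ↦ (hS.1 he).1

theorem IsMST.isSpanningTree_fromEdgeSet_union (hT : IsMST G w T) {p : ℝ} {S : Set (Sym2 V)}
    (hS : IsClusterSpanningTree G w p S) :
    IsSpanningTree G (fromEdgeSet ({e ∈ T.edgeSet | w e ≤ p} ∪ S)) := by
  have hlow : {e ∈ T.edgeSet | w e ≤ p} ⊆ lowEdges G w p := fun e he ↦
    ⟨edgeSet_mono hT.1.1 he.1, he.2⟩
  refine ⟨(fromEdgeSet_le _).2 (Set.sdiff_subset.trans (hT.sep_le_union_subset_edgeSet hS)),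
    hS.2.1.of_forall_adj fun u v huv ↦ ?_, ?_⟩
  · rcases ((fromEdgeSet_adj _).1 huv).1 with hl | hs
    · exact (hT.reachable_of_weight_le hl.1 hl.2).mono (fromEdgeSet_mono Set.subset_union_left)
    · exact Adj.reachable ((fromEdgeSet_adj _).2 ⟨.inr hs, huv.ne⟩)
  · refine isAcyclic_of_forall_notMem_isBridge (K := fromEdgeSet {e ∈ T.edgeSet | w e ≤ p})
      (hT.1.2.isAcyclic.anti ((fromEdgeSet_le _).2 (Set.sdiff_subset.trans (Set.sep_subset _ _))))
      fun e he heK ↦ ?_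
    rw [edgeSet_fromEdgeSet] at he heK
    have heS : e ∈ S := he.1.resolve_left fun h ↦ heK ⟨h, he.2⟩
    exact (hS.isBridge heS).anti (fromEdgeSet_mono (Set.union_subset_union_left S hlow))

end MinimalSpanningTree

theorem mst_contraction_general [Fintype V] (G : SimpleGraph V)
    (w : Sym2 V → ℝ)
    (T : SimpleGraph V) (hT : IsMST G w T) (p : ℝ) :
    IsClusterSpanningTree G w p {e ∈ T.edgeSet | p < w e} ∧
      ∀ S : Set (Sym2 V), IsClusterSpanningTree G w p S →
        ∑ e ∈ {e ∈ T.edgeSet | p < w e}.toFinite.toFinset, w e ≤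
          ∑ e ∈ S.toFinite.toFinset, w e := by
  refine ⟨hT.isClusterSpanningTree p, fun S hS ↦ ?_⟩
  have hcmp := hT.2 _ (hT.isSpanningTree_fromEdgeSet_union hS)
  have hdisj : Disjoint {e ∈ T.edgeSet | w e ≤ p} S :=
    Set.disjoint_left.2 fun e h1 h2 ↦ (not_lt.2 h1.2) (hS.1 h2).2
  rw [graphWeight_eq_finsum, graphWeight_eq_finsum,
    edgeSet_fromEdgeSet_of_subset (hT.sep_le_union_subset_edgeSet hS),
    finsum_mem_union hdisj (Set.toFinite _) (Set.toFinite _),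
    finsum_mem_eq_sep_le_add_sep_lt (Set.toFinite _) w p] at hcmp
  rw [← finsum_mem_eq_finite_toFinset_sum, ← finsum_mem_eq_finite_toFinset_sum]
  linarith

/-- Contracting the `p`-clusters maps the minimal spanning tree of `G` onto the minimal spanning
tree of the contracted graph `G^p`: the edges of `T` of weight `> p` form a spanning tree of
`G^p` of minimal total weight. -/
theorem mst_contraction [Fintype V] (G : SimpleGraph V) (hG : G.Connected)
    (w : Sym2 V → ℝ) (hw : Set.InjOn w G.edgeSet)
    (T : SimpleGraph V) (hT : IsMST G w T) (p : ℝ) :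
    IsClusterSpanningTree G w p {e ∈ T.edgeSet | p < w e} ∧
      ∀ S : Set (Sym2 V), IsClusterSpanningTree G w p S →
        ∑ e ∈ {e ∈ T.edgeSet | p < w e}.toFinite.toFinset, w e ≤
          ∑ e ∈ S.toFinite.toFinset, w e :=
  mst_contraction_general G w T hT p
end

section
/- Let G be a locally finite infinite graph with an injective edge labelling U, let x be a vertex, and suppose that the invasion tree InvPerc(x) at some finite stage T_n is contained in an infinite cluster of the subgraph {e : U(e) ≤ p} and all edges of T_n have label ≤ p. Then all subsequently invaded edges have label ≤ p; i.e., once the invasion enters an infinite p-cluster it never leaves it. -/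
open SimpleGraph

variable {V : Type*}

/-- The vertices spanned by the starting vertex `x` together with a set `S` of edges. -/
def spannedVerts (x : V) (S : Set (Sym2 V)) : Set V := {x} ∪ {v | ∃ e ∈ S, v ∈ e}

/-- The edge boundary of a vertex set `A`: edges of `G` with exactly one endpoint in `A`. -/
def edgeBoundary (G : SimpleGraph V) (A : Set V) : Set (Sym2 V) :=
  {e | e ∈ G.edgeSet ∧ ∃ a ∈ A, ∃ b ∉ A, e = s(a, b)}

/-- One step of the invasion process: add the boundary edge of smallest label (if it exists). -/
noncomputable def invStep (G : SimpleGraph V) (U : Sym2 V → ℝ) (x : V) (S : Set (Sym2 V)) :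
    Set (Sym2 V) :=
  letI := Classical.propDecidable
  if h : ∃ e ∈ edgeBoundary G (spannedVerts x S),
      ∀ f ∈ edgeBoundary G (spannedVerts x S), U e ≤ U f
  then insert h.choose S else S

/-- The invasion tree `T_n` after `n` steps, started at `x`. -/
noncomputable def invTree (G : SimpleGraph V) (U : Sym2 V → ℝ) (x : V) : ℕ → Set (Sym2 V)
  | 0 => ∅
  | n + 1 => invStep G U x (invTree G U x n)

/-- The invasion percolation tree of `x`: the union of the invasion trees `T_n`. -/
noncomputable def InvPerc (G : SimpleGraph V) (U : Sym2 V → ℝ) (x : V) : Set (Sym2 V) :=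
  ⋃ n, invTree G U x n

/-!
Inductively, the invaded vertices lie in the `p`-cluster of `x` and the invaded edges have label
`≤ p`. The invaded vertex set is finite while the cluster is infinite, so a path in the cluster
leaves it through a boundary edge of label `≤ p`; the invaded edge, being the minimal boundary edge,
then also has label `≤ p`, and its new endpoint joins the cluster.
-/

lemma spannedVerts_finite (x : V) {S : Set (Sym2 V)} (hS : S.Finite) :
    (spannedVerts x S).Finite := by
  classical
  refine (Set.finite_singleton x).union ?_
  have hcover : {v | ∃ e ∈ S, v ∈ e} = ⋃ e ∈ S, (e.toFinset : Set V) := by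
    ext v; simp
  rw [hcover]
  exact hS.biUnion fun e _ => e.toFinset.finite_toSet

lemma mem_spannedVerts_insert {x v : V} {e : Sym2 V} {S : Set (Sym2 V)} :
    v ∈ spannedVerts x (insert e S) ↔ v ∈ e ∨ v ∈ spannedVerts x S := by
  simp only [spannedVerts, Set.mem_union, Set.mem_singleton_iff, Set.mem_ofPred_eq,
    Set.mem_insert_iff, exists_eq_or_imp]
  tauto

lemma invStep_eq_self_or (G : SimpleGraph V) (U : Sym2 V → ℝ) (x : V) (S : Set (Sym2 V)) :
    invStep G U x S = S ∨ ∃ e ∈ edgeBoundary G (spannedVerts x S),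
      (∀ f ∈ edgeBoundary G (spannedVerts x S), U e ≤ U f) ∧ invStep G U x S = insert e S := by
  unfold invStep
  split
  case isTrue h => exact Or.inr ⟨h.choose, h.choose_spec.1, h.choose_spec.2, rfl⟩
  case isFalse => exact Or.inl rfl

lemma invTree_finite (G : SimpleGraph V) (U : Sym2 V → ℝ) (x : V) (n : ℕ) :
    (invTree G U x n).Finite := by
  induction n with
  | zero => exact Set.finite_empty
  | succ n ih =>
    rcases invStep_eq_self_or G U x (invTree G U x n) with h | ⟨e, -, -, h⟩
    · simpa [invTree, h] using ih
    · simpa [invTree, h] using ih.insert e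

section Invasion

variable {G : SimpleGraph V} {U : Sym2 V → ℝ} {x : V} {p : ℝ}

lemma exists_mem_edgeBoundary_label_le {A : Set V} (hA : A.Finite) (hx : x ∈ A)
    (hinf : {v | (G.deleteEdges {e | p < U e}).Reachable x v}.Infinite) :
    ∃ e ∈ edgeBoundary G A, U e ≤ p := by
  obtain ⟨w, ⟨hw⟩, hwA⟩ := (hinf.sdiff hA).nonempty
  obtain ⟨d, -, hdA, hdA'⟩ := hw.exists_boundary_dart A hx hwA
  obtain ⟨hG, hp⟩ := deleteEdges_adj.mp d.adj
  exact ⟨s(d.fst, d.snd), ⟨hG, d.fst, hdA, d.snd, hdA', rfl⟩, not_lt.mp hp⟩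

def InClusterBelow (G : SimpleGraph V) (U : Sym2 V → ℝ) (x : V) (p : ℝ) (S : Set (Sym2 V)) :
    Prop :=
  (∀ v ∈ spannedVerts x S, (G.deleteEdges {e | p < U e}).Reachable x v) ∧ ∀ e ∈ S, U e ≤ p

lemma InClusterBelow.invStep {S : Set (Sym2 V)} (hS : InClusterBelow G U x p S)
    (hfin : S.Finite) (hinf : {v | (G.deleteEdges {e | p < U e}).Reachable x v}.Infinite) :
    InClusterBelow G U x p (invStep G U x S) := by
  rcases invStep_eq_self_or G U x S with h | ⟨c, ⟨hcG, a, ha, b, -, rfl⟩, hmin, h⟩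
  · rwa [h]
  rw [h]
  obtain ⟨e, he, hep⟩ :=
    exists_mem_edgeBoundary_label_le (spannedVerts_finite x hfin) (Or.inl rfl) hinf
  have hcp : U s(a, b) ≤ p := (hmin e he).trans hep
  have hab : (G.deleteEdges {e | p < U e}).Adj a b := deleteEdges_adj.mpr ⟨hcG, not_lt.mpr hcp⟩
  refine ⟨fun v hv => ?_, fun e he => ?_⟩
  · rcases mem_spannedVerts_insert.mp hv with hv | hv
    · rcases Sym2.mem_iff.mp hv with rfl | rfl
      · exact hS.1 v ha
      · exact (hS.1 a ha).trans hab.reachable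
    · exact hS.1 v hv
  · rcases he with rfl | he
    · exact hcp
    · exact hS.2 e he

end Invasion

theorem invPerc_stays_in_infinite_cluster_general (G : SimpleGraph V)
    (U : Sym2 V → ℝ) (x : V) (p : ℝ) (n : ℕ)
    (hinf : {v | (G.deleteEdges {e | p < U e}).Reachable x v}.Infinite)
    (hcontain : ∀ v ∈ spannedVerts x (invTree G U x n),
      (G.deleteEdges {e | p < U e}).Reachable x v)
    (hlab : ∀ e ∈ invTree G U x n, U e ≤ p) :
    ∀ m, n ≤ m → ∀ e ∈ invTree G U x m, U e ≤ p := by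
  have hcluster : ∀ m, n ≤ m → InClusterBelow G U x p (invTree G U x m) := by
    intro m hnm
    induction m, hnm using Nat.le_induction with
    | base => exact ⟨hcontain, hlab⟩
    | succ m _ ih => exact ih.invStep (invTree_finite G U x m) hinf
  exact fun m hnm => (hcluster m hnm).2

/-- Once the invasion tree is contained in an infinite cluster of the subgraph of edges with
label `≤ p` (and all invaded edges so far have label `≤ p`), all subsequently invaded edges
have label `≤ p`: the invasion never leaves the infinite `p`-cluster. -/
theorem invPerc_stays_in_infinite_cluster [Infinite V] (G : SimpleGraph V)
    (hlf : ∀ v : V, (G.neighborSet v).Finite)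
    (U : Sym2 V → ℝ) (hU : Set.InjOn U G.edgeSet) (x : V) (p : ℝ) (n : ℕ)
    (hinf : {v | (G.deleteEdges {e | p < U e}).Reachable x v}.Infinite)
    (hcontain : ∀ v ∈ spannedVerts x (invTree G U x n),
      (G.deleteEdges {e | p < U e}).Reachable x v)
    (hlab : ∀ e ∈ invTree G U x n, U e ≤ p) :
    ∀ m, n ≤ m → ∀ e ∈ invTree G U x m, U e ≤ p :=
  invPerc_stays_in_infinite_cluster_general G U x p n hinf hcontain hlab
end
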